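/- Let d ≥ 1 and let μ be a translation invariant probability measure on X with E_μ[η(0)] = ∞. Then μ is not stabilizable. -/

import Mathlib

open MeasureTheory Filter Topology
open scoped ENNReal NNReal

/-- Sites of the lattice `ℤ^d`. -/
abbrev Site (d : ℕ) := Fin d → ℤ

/-- Sandpile configurations: `X = ℕ^{ℤ^d}`. -/
abbrev Config (d : ℕ) := Site d → ℕ

/-- Nearest-neighbor adjacency on `ℤ^d` (`ℓ¹`-distance one). -/
def Adjacent {d : ℕ} (x y : Site d) : Prop :=
  (∑ i, (x i - y i).natAbs) = 1

/-- Sum of the values of `f` over the `2d` nearest neighbors of `y`. -/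
def nbrSum {d : ℕ} {M : Type*} [AddCommMonoid M] (f : Site d → M) (y : Site d) : M :=
  ∑ i : Fin d, (f (Function.update y i (y i + 1)) + f (Function.update y i (y i - 1)))

/-- The left limit `T(t-, x, η)` of a (monotone, `ℕ`-valued) toppling function. -/
noncomputable def leftVal {d : ℕ} (T : NNReal → Site d → Config d → ℕ)
    (t : NNReal) (x : Site d) (η : Config d) : ℕ :=
  sSup ((fun s => T s x η) '' Set.Iio t)

/-- A toppling procedure on `ℤ^d` (Definition 2.1): a measurable map
`T : [0,∞) × ℤ^d × X → ℕ` such that (a) `T(0,x,η) = 0`; (b) `t ↦ T(t,x,η)` is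
right-continuous, nondecreasing, with jumps of size at most one; (c) finitely many
jumps in every finite time interval; (d) no infinite backward chain of topplings. -/
structure TopplingProcedure (d : ℕ) where
  T : NNReal → Site d → Config d → ℕ
  measurable : ∀ x : Site d, Measurable fun p : NNReal × Config d => T p.1 x p.2
  init : ∀ (x : Site d) (η : Config d), T 0 x η = 0
  mono : ∀ (x : Site d) (η : Config d), Monotone fun t => T t x η
  jumpLe : ∀ (x : Site d) (η : Config d) (t : NNReal), T t x η ≤ leftVal T t x η + 1
  rightCont : ∀ (x : Site d) (η : Config d) (t : NNReal),
    ∃ ε : NNReal, 0 < ε ∧ ∀ s, t ≤ s → s < t + ε → T s x η = T t x η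
  finJumps : ∀ (x : Site d) (η : Config d) (b : NNReal),
    {t : NNReal | t ≤ b ∧ leftVal T t x η < T t x η}.Finite
  noBackwardChain : ∀ η : Config d, ¬ ∃ (xs : ℕ → Site d) (ts : ℕ → NNReal),
    (∀ i, Adjacent (xs (i + 1)) (xs i)) ∧ StrictAnti ts ∧
    (∀ i, leftVal T (ts i) (xs i) η < T (ts i) (xs i) η)

namespace TopplingProcedure

variable {d : ℕ}

/-- The configuration `η_t = η − Δ T(t,·,η)` at time `t` (as a `ℤ`-valued function). -/
def configAt (P : TopplingProcedure d) (η : Config d) (t : NNReal) (y : Site d) : ℤ :=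
  (η y : ℤ) + nbrSum (fun x => (P.T t x η : ℤ)) y - 2 * d * (P.T t y η : ℤ)

/-- The configuration `η_{t-}` just before time `t`. -/
noncomputable def configLeft (P : TopplingProcedure d) (η : Config d) (t : NNReal)
    (y : Site d) : ℤ :=
  (η y : ℤ) + nbrSum (fun x => (leftVal P.T t x η : ℤ)) y - 2 * d * (leftVal P.T t y η : ℤ)

/-- Site `x` topples at time `t` if `T(t,x,η) > T(t-,x,η)`. -/
def TopplesAt (P : TopplingProcedure d) (η : Config d) (x : Site d) (t : NNReal) : Prop :=
  leftVal P.T t x η < P.T t x η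

/-- A toppling procedure is legal if only unstable sites are toppled:
whenever `x` topples at time `t > 0`, `η_{t-}(x) ≥ 2d`. -/
def Legal (P : TopplingProcedure d) : Prop :=
  ∀ (η : Config d) (t : NNReal) (x : Site d), 0 < t → P.TopplesAt η x t →
    (2 * d : ℤ) ≤ P.configLeft η t x

/-- `T` is finite for `η` if `T(∞,x,η) = sup_t T(t,x,η) < ∞` for every `x`. -/
def FiniteFor (P : TopplingProcedure d) (η : Config d) : Prop :=
  ∀ x : Site d, BddAbove (Set.range fun t => P.T t x η)

/-- `T(∞,x,η) = sup_{t ≥ 0} T(t,x,η)`. -/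
noncomputable def Tinf (P : TopplingProcedure d) (η : Config d) (x : Site d) : ℕ :=
  sSup (Set.range fun t => P.T t x η)

/-- The limit configuration `η_∞ = η − Δ T(∞,·,η)` (as a `ℤ`-valued function). -/
noncomputable def finalConfig (P : TopplingProcedure d) (η : Config d) (y : Site d) : ℤ :=
  (η y : ℤ) + nbrSum (fun x => (P.Tinf η x : ℤ)) y - 2 * d * (P.Tinf η y : ℤ)

/-- `T` is stabilizing for `η` if it is finite for `η` and the limit configuration
`η_∞` is stable, i.e. takes values in `{0, 1, …, 2d−1}`. -/
def StabilizingFor (P : TopplingProcedure d) (η : Config d) : Prop :=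
  P.FiniteFor η ∧ ∀ y : Site d, 0 ≤ P.finalConfig η y ∧ P.finalConfig η y ≤ 2 * d - 1

end TopplingProcedure

/-- A configuration `η` is stabilizable if there exists a stabilizing legal
toppling procedure for `η`. -/
def Stabilizable {d : ℕ} (η : Config d) : Prop :=
  ∃ P : TopplingProcedure d, P.Legal ∧ P.StabilizingFor η

/-- The shift of a configuration by a lattice vector `v`. -/
def shiftConfig {d : ℕ} (v : Site d) (η : Config d) : Config d := fun x => η (x + v)

/-- A probability measure on `X` is translation invariant if it is invariant
under all shifts of `ℤ^d`. -/
def TransInvariant {d : ℕ} (μ : Measure (Config d)) : Prop :=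
  ∀ v : Site d, Measure.map (shiftConfig v) μ = μ

/-- `μ` is a product measure: under `μ` the coordinates `(η(x))` are i.i.d. -/
def IsProductMeasure {d : ℕ} (μ : Measure (Config d)) : Prop :=
  ProbabilityTheory.iIndepFun
      (fun (x : Site d) (η : Config d) => η x) μ ∧
    ∀ x : Site d, Measure.map (fun η : Config d => η x) μ
      = Measure.map (fun η : Config d => η (0 : Site d)) μ

/-- `x` belongs to the set `T_∞` of sites that topple during stabilization of `η`. -/
def ToppledInf {d : ℕ} (η : Config d) (x : Site d) : Prop :=
  ∃ P : TopplingProcedure d, P.Legal ∧ P.StabilizingFor η ∧ 0 < P.Tinf η x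

/-- `x` belongs to `W_∞ = T_∞ ∪ {x : η_∞(x) > 0}`: `x` topples during stabilization
of `η`, or is nonempty after stabilization. -/
def InWinf {d : ℕ} (η : Config d) (x : Site d) : Prop :=
  ∃ P : TopplingProcedure d, P.Legal ∧ P.StabilizingFor η ∧
    (0 < P.Tinf η x ∨ 0 < P.finalConfig η x)

/-- `y` lies in the cluster of `x` of the set `S`: `x` and `y` are joined by a
nearest-neighbor path inside `S`. -/
def InClusterOf {d : ℕ} (S : Site d → Prop) (x y : Site d) : Prop :=
  ∃ (k : ℕ) (f : ℕ → Site d), f 0 = x ∧ f k = y ∧ (∀ i ≤ k, S (f i)) ∧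
    ∀ i < k, Adjacent (f i) (f (i + 1))

/-!
If `μ`-a.e. `η` is stabilizable, the parallel-toppling odometer `u` is finite, translation
covariant and satisfies `η − Δu ≤ 2d − 1`. Truncating at level `M`, `w = min u M` satisfies
`η(0) 1{u(0) < M} + ∑_{y ∼ 0} w(y) ≤ 2d (w(0) + 1)`. By translation invariance the neighbour
sum has expectation `2d E[w(0)] ≤ 2d M < ∞`, which cancels, so `E[η(0); u(0) < M] ≤ 2d`;
monotone convergence in `M` then gives `E[η(0)] ≤ 2d`.
-/

section Odometer

variable {d : ℕ}

theorem nbrSum_natCast {R : Type*} [AddCommMonoidWithOne R] (f : Site d → ℕ) (y : Site d) :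
    ((nbrSum f y : ℕ) : R) = nbrSum (fun x => (f x : R)) y := by
  simp [nbrSum]

theorem nbrSum_mono {M : Type*} [AddCommMonoid M] [PartialOrder M] [IsOrderedAddMonoid M]
    {f g : Site d → M} (h : f ≤ g) (y : Site d) : nbrSum f y ≤ nbrSum g y :=
  Finset.sum_le_sum fun _ _ => add_le_add (h _) (h _)

theorem nbrSum_const {M : Type*} [AddCommMonoid M] (c : M) (y : Site d) :
    nbrSum (fun _ => c) y = (2 * d) • c := by
  simp [nbrSum, two_mul, add_smul]

theorem nbrSum_comp_add_right {M : Type*} [AddCommMonoid M] (f : Site d → M) (v y : Site d) :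
    nbrSum (fun x => f (x + v)) y = nbrSum f (y + v) := by
  have update_add_right (i : Fin d) (a : ℤ) :
      Function.update y i a + v = Function.update (y + v) i (a + v i) := by
    rw [Function.update_add, Function.update_eq_self]
  simp only [nbrSum, update_add_right, Pi.add_apply, add_right_comm, sub_add_eq_add_sub]

/-- `η − Δ v ≤ 2d − 1` pointwise, cleared of subtractions. -/
def IsStabilizingOdometer (η : Config d) (v : Site d → ℕ) : Prop :=
  ∀ y, η y + nbrSum v y < 2 * d * (v y + 1)

theorem Stabilizable.exists_isStabilizingOdometer {η : Config d} (h : Stabilizable η) :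
    ∃ v, IsStabilizingOdometer η v := by
  obtain ⟨P, -, -, hstable⟩ := h
  refine ⟨P.Tinf η, fun y => ?_⟩
  have hy := (hstable y).2
  rw [TopplingProcedure.finalConfig] at hy
  zify
  rw [nbrSum_natCast]
  linarith

def parallelOdometer (η : Config d) : ℕ → Site d → ℕ
  | 0 => 0
  | n + 1 => fun x => parallelOdometer η n x +
      if 2 * d * (parallelOdometer η n x + 1) ≤ η x + nbrSum (parallelOdometer η n) x then 1 else 0

theorem parallelOdometer_mono (η : Config d) (x : Site d) :
    Monotone fun n => parallelOdometer η n x :=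
  monotone_nat_of_le_succ fun n => by simp [parallelOdometer]

theorem IsStabilizingOdometer.parallelOdometer_le {η : Config d} {v : Site d → ℕ}
    (hv : IsStabilizingOdometer η v) (n : ℕ) : parallelOdometer η n ≤ v := by
  induction n with
  | zero => exact fun x => Nat.zero_le _
  | succ n ih =>
    intro x
    have hx : parallelOdometer η n x ≤ v x := ih x
    obtain hlt | heq := hx.lt_or_eq
    · simp only [parallelOdometer]
      split <;> omega
    · have hstable :
          ¬ 2 * d * (parallelOdometer η n x + 1) ≤ η x + nbrSum (parallelOdometer η n) x := by
        have := nbrSum_mono ih x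
        have := hv x
        rw [heq]
        omega
      simp only [parallelOdometer, if_neg hstable, add_zero]
      exact hx

theorem measurable_parallelOdometer (n : ℕ) (x : Site d) :
    Measurable fun η : Config d => parallelOdometer η n x := by
  induction n generalizing x with
  | zero => exact measurable_const
  | succ n ih =>
    have hnbr : Measurable fun η : Config d => nbrSum (parallelOdometer η n) x :=
      Finset.measurable_sum _ fun i _ => (ih _).add (ih _)
    refine (ih x).add (Measurable.ite ?_ measurable_const measurable_const)
    exact measurableSet_le (by fun_prop) ((measurable_pi_apply x).add hnbr)

theorem parallelOdometer_shiftConfig (v : Site d) (η : Config d) (n : ℕ) (x : Site d) :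
    parallelOdometer (shiftConfig v η) n x = parallelOdometer η n (x + v) := by
  induction n generalizing x with
  | zero => rfl
  | succ n ih =>
    simp only [parallelOdometer, ih, shiftConfig]
    rw [show parallelOdometer (shiftConfig v η) n = fun y => parallelOdometer η n (y + v) from
      funext ih, nbrSum_comp_add_right]

/-- The limit of parallel toppling; `⨆` in `ℕ` is `0` when the rounds are unbounded. -/
noncomputable def odometer (η : Config d) (x : Site d) : ℕ :=
  ⨆ n, parallelOdometer η n x

theorem IsStabilizingOdometer.eventually_parallelOdometer_eq {η : Config d} {v : Site d → ℕ}
    (hv : IsStabilizingOdometer η v) (x : Site d) :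
    ∀ᶠ n in atTop, parallelOdometer η n x = odometer η x := by
  have hbdd : BddAbove (Set.range fun n => parallelOdometer η n x) :=
    ⟨v x, Set.forall_mem_range.2 fun n => hv.parallelOdometer_le n x⟩
  have := tendsto_atTop_ciSup (parallelOdometer_mono η x) hbdd
  rwa [nhds_discrete, tendsto_pure] at this

theorem eventually_nbrSum_eq {M : Type*} [AddCommMonoid M] {f : ℕ → Site d → M} {g : Site d → M}
    (h : ∀ x, ∀ᶠ n in atTop, f n x = g x) (y : Site d) :
    ∀ᶠ n in atTop, nbrSum (f n) y = nbrSum g y := by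
  filter_upwards [eventually_all.2 fun i : Fin d => h (Function.update y i (y i + 1)),
    eventually_all.2 fun i : Fin d => h (Function.update y i (y i - 1))] with n hplus hminus
  simp only [nbrSum, hplus, hminus]

theorem IsStabilizingOdometer.isStabilizingOdometer_odometer {η : Config d} {v : Site d → ℕ}
    (hv : IsStabilizingOdometer η v) : IsStabilizingOdometer η (odometer η) := by
  intro y
  have hlim := hv.eventually_parallelOdometer_eq
  obtain ⟨n, hn, hnbr, hsucc⟩ := ((hlim y).and <| (eventually_nbrSum_eq hlim y).and <|
    (tendsto_add_atTop_nat 1).eventually (hlim y)).exists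
  simp only [parallelOdometer, hn, hnbr] at hsucc
  by_contra! hunstable
  simp [hunstable] at hsucc

theorem measurable_odometer (x : Site d) : Measurable fun η : Config d => odometer η x :=
  Measurable.iSup fun n => measurable_parallelOdometer n x

theorem odometer_shiftConfig (v : Site d) (η : Config d) (x : Site d) :
    odometer (shiftConfig v η) x = odometer η (x + v) := by
  simp only [odometer, parallelOdometer_shiftConfig]

theorem IsStabilizingOdometer.ite_add_nbrSum_min_le {η : Config d} {v : Site d → ℕ}
    (hv : IsStabilizingOdometer η v) (M : ℕ) (y : Site d) :
    (if v y < M then η y else 0) + nbrSum (fun x => min (v x) M) y ≤ 2 * d * (min (v y) M + 1) := by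
  split_ifs with hlt
  · have := nbrSum_mono (fun x => min_le_left (v x) M) y
    have := hv y
    rw [min_eq_left hlt.le]
    omega
  · have := nbrSum_mono (fun x => min_le_right (v x) M) y
    rw [nbrSum_const, smul_eq_mul] at this
    rw [min_eq_right (not_lt.1 hlt), zero_add]
    nlinarith

end Odometer

section Integration
variable {d : ℕ} {μ : Measure (Config d)}

theorem measurable_shiftConfig (v : Site d) : Measurable (shiftConfig (d := d) v) :=
  measurable_pi_lambda _ fun x => measurable_pi_apply (x + v)

theorem TransInvariant.lintegral_comp_shiftConfig (hinv : TransInvariant μ) {f : Config d → ℝ≥0∞}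
    (hf : Measurable f) (v : Site d) : ∫⁻ η, f (shiftConfig v η) ∂μ = ∫⁻ η, f η ∂μ := by
  rw [← lintegral_map hf (measurable_shiftConfig v), hinv v]

theorem TransInvariant.lintegral_nbrSum (hinv : TransInvariant μ) {F : Config d → Site d → ℝ≥0∞}
    (hF : ∀ x, Measurable fun η => F η x)
    (hcov : ∀ v η x, F (shiftConfig v η) x = F η (x + v)) (y : Site d) :
    ∫⁻ η, nbrSum (F η) y ∂μ = 2 * d * ∫⁻ η, F η y ∂μ := by
  have hF_eq (x : Site d) : ∫⁻ η, F η x ∂μ = ∫⁻ η, F η y ∂μ := by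
    simpa [hcov] using hinv.lintegral_comp_shiftConfig (hF y) (x - y)
  unfold nbrSum
  rw [lintegral_finsetSum _ fun i _ => ?_]
  · simp [lintegral_add_left (hF _), hF_eq, two_mul, add_mul]
  · exact (hF _).add (hF _)

theorem measurable_ite_odometer_lt (M : ℕ) :
    Measurable fun η : Config d => ((if odometer η 0 < M then η 0 else 0 : ℕ) : ℝ≥0∞) :=
  measurable_from_top.comp <| Measurable.ite (measurableSet_lt (measurable_odometer 0)
    measurable_const) (measurable_pi_apply 0) measurable_const

variable [IsFiniteMeasure μ]

theorem TransInvariant.lintegral_ite_odometer_lt_le (hinv : TransInvariant μ)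
    (hae : ∀ᵐ η ∂μ, ∃ v, IsStabilizingOdometer η v) (M : ℕ) :
    ∫⁻ η, ((if odometer η 0 < M then η 0 else 0 : ℕ) : ℝ≥0∞) ∂μ ≤ 2 * d * μ Set.univ := by
  set w : Config d → Site d → ℝ≥0∞ := fun η x => (min (odometer η x) M : ℕ) with hw
  have hw_meas (x : Site d) : Measurable fun η => w η x :=
    (measurable_from_top (f := fun k : ℕ => ((min k M : ℕ) : ℝ≥0∞))).comp (measurable_odometer x)
  have hpointwise : ∀ᵐ η ∂μ, ((if odometer η 0 < M then η 0 else 0 : ℕ) : ℝ≥0∞) + nbrSum (w η) 0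
      ≤ 2 * d * (w η 0 + 1) := by
    filter_upwards [hae] with η ⟨v, hv⟩
    have h := hv.isStabilizingOdometer_odometer.ite_add_nbrSum_min_le M 0
    rw [← Nat.cast_le (α := ℝ≥0∞), Nat.cast_add, nbrSum_natCast] at h
    simp only [hw]
    push_cast at h ⊢
    exact h
  have hw_fin : ∫⁻ η, w η 0 ∂μ ≠ ⊤ := by
    refine ne_top_of_le_ne_top (by finiteness : (M : ℝ≥0∞) * μ Set.univ ≠ ⊤) ?_
    rw [← lintegral_const]
    exact lintegral_mono fun η => by simp [hw]
  have hcov (v : Site d) (η : Config d) (x : Site d) : w (shiftConfig v η) x = w η (x + v) := by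
    simp only [hw, odometer_shiftConfig]
  have hintegrated : ∫⁻ η, ((if odometer η 0 < M then η 0 else 0 : ℕ) : ℝ≥0∞) ∂μ
      + 2 * d * ∫⁻ η, w η 0 ∂μ ≤ 2 * d * μ Set.univ + 2 * d * ∫⁻ η, w η 0 ∂μ :=
    calc _ = ∫⁻ η, ((if odometer η 0 < M then η 0 else 0 : ℕ) : ℝ≥0∞) + nbrSum (w η) 0 ∂μ := by
          rw [lintegral_add_left (measurable_ite_odometer_lt M), hinv.lintegral_nbrSum hw_meas hcov]
      _ ≤ ∫⁻ η, 2 * d * (w η 0 + 1) ∂μ := lintegral_mono_ae hpointwise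
      _ = 2 * d * μ Set.univ + 2 * d * ∫⁻ η, w η 0 ∂μ := by
          rw [lintegral_const_mul _ ((hw_meas 0).add_const 1),
            lintegral_add_right _ measurable_const, lintegral_const, one_mul, mul_add, add_comm]
  exact (ENNReal.add_le_add_iff_right (by finiteness)).1 hintegrated

theorem TransInvariant.lintegral_apply_zero_le (hinv : TransInvariant μ)
    (hae : ∀ᵐ η ∂μ, ∃ v, IsStabilizingOdometer η v) :
    ∫⁻ η, (η 0 : ℝ≥0∞) ∂μ ≤ 2 * d * μ Set.univ := by
  have hsup (η : Config d) :
      ⨆ M : ℕ, ((if odometer η 0 < M then η 0 else 0 : ℕ) : ℝ≥0∞) = η 0 :=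
    le_antisymm (iSup_le fun M => by split_ifs <;> simp)
      (le_iSup_of_le (odometer η 0 + 1) (by simp))
  have hmono : Monotone fun (M : ℕ) (η : Config d) =>
      ((if odometer η 0 < M then η 0 else 0 : ℕ) : ℝ≥0∞) := by
    intro M M' hM η
    exact Nat.cast_le.2 (by split_ifs <;> omega)
  calc ∫⁻ η, (η 0 : ℝ≥0∞) ∂μ
      = ⨆ M : ℕ, ∫⁻ η, ((if odometer η 0 < M then η 0 else 0 : ℕ) : ℝ≥0∞) ∂μ := by
        simp_rw [← hsup]
        exact lintegral_iSup measurable_ite_odometer_lt hmono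
    _ ≤ 2 * d * μ Set.univ := iSup_le (hinv.lintegral_ite_odometer_lt_le hae)

end Integration


theorem statement5_general (d : ℕ) (μ : Measure (Config d))
    [IsProbabilityMeasure μ] (hinv : TransInvariant μ)
    (hmean : ∫⁻ η, (η (0 : Site d) : ℝ≥0∞) ∂μ = ⊤) :
    ¬ ∀ᵐ η ∂μ, Stabilizable η := by
  intro hae
  have hbound := hinv.lintegral_apply_zero_le
    (hae.mono fun _ hη => hη.exists_isStabilizingOdometer)
  rw [hmean, measure_univ, mul_one, top_le_iff] at hbound
  exact (by finiteness : 2 * (d : ℝ≥0∞) ≠ ⊤) hbound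

/-- Lemma 2.10 (second part): a translation invariant probability measure with
`E_μ[η(0)] = ∞` is not stabilizable. -/
theorem statement5 (d : ℕ) (hd : 1 ≤ d) (μ : Measure (Config d))
    [IsProbabilityMeasure μ] (hinv : TransInvariant μ)
    (hmean : ∫⁻ η, (η (0 : Site d) : ℝ≥0∞) ∂μ = ⊤) :
    ¬ ∀ᵐ η ∂μ, Stabilizable η :=
  statement5_general d μ hinv hmean
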